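/- arXiv:1510.00863 — 3 statements merged into one kernel-verified Lean document; each statement's English description precedes it below -/
import Mathlib

section
/- The alternating sum ∑_{k≥0} (-1)^{k+1} N_{k,ℓ} satisfies the recurrence ∑_{k≥0} (-1)^{k+1} N_{k,ℓ} = - ∑_{k≥0} (-1)^{k+1} N_{k,ℓ-1} for every ℓ ≥ 1. -/
/-!
Sorting a surjection `Fin (n + 1) → Fin k` by the value `b` it takes at `0`, its tail is either
itself surjective or a surjection onto `{b}ᶜ`, so `N k (n + 1) = k * (N k n + N (k - 1) n)`.
Substituting this into `∑ₖ (-1)^k N k (n + 1)` and shifting the index of the second part, the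
terms combine to `-∑ₖ (-1)^k N k n`; hence `∑ₖ (-1)^k N k n = (-1)^n`, which gives the
recurrence at once.
-/

/-- `N k ℓ` : the number of ordered set partitions of an `ℓ`-element set into `k`
nonempty blocks, i.e. the number of surjections from `Fin ℓ` onto `Fin k`. -/
noncomputable def N (k ℓ : ℕ) : ℕ := Nat.card {f : Fin ℓ → Fin k // Function.Surjective f}

open Finset Function

section Surjections

variable {α β γ : Type*}

theorem card_surjective_congr (e : β ≃ γ) :
    Nat.card {f : α → β // Surjective f} = Nat.card {f : α → γ // Surjective f} :=
  Nat.card_congr <| ((Equiv.refl α).arrowCongr e).subtypeEquiv fun f =>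
    (e.comp_surjective f).symm

theorem card_range_eq_eq_card_surjective (s : Set β) :
    Nat.card {f : α → β // Set.range f = s} = Nat.card {g : α → s // Surjective g} :=
  Nat.card_congr
    { toFun := fun f => ⟨s.codRestrict f.1 fun a => f.2.subset (Set.mem_range_self a),
        (Set.surjective_codRestrict _).2 f.2⟩
      invFun := fun g => ⟨Subtype.val ∘ g.1, by
        rw [Set.range_comp, g.2.range_eq, Set.image_univ, Subtype.range_coe]⟩
      left_inv := fun _ => rfl
      right_inv := fun _ => rfl }

theorem Set.insert_eq_univ_iff {b : β} {S : Set β} :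
    insert b S = Set.univ ↔ S = Set.univ ∨ S = {b}ᶜ := by
  rw [Set.insert_eq, ← Set.compl_subset_iff_union, Set.compl_subset_comm,
    Set.subset_singleton_iff_eq, Set.compl_empty_iff, compl_eq_comm, eq_comm (b := S)]

theorem card_insert_range_eq_univ [Finite α] [Finite β] (b : β) :
    Nat.card {g : α → β // insert b (Set.range g) = Set.univ} =
      Nat.card {g : α → β // Surjective g} +
        Nat.card {g : α → ({b}ᶜ : Set β) // Surjective g} := by
  classical
  rw [← card_range_eq_eq_card_surjective, ← Nat.card_sum]
  refine Nat.card_congr ((Equiv.subtypeEquivRight fun g => ?_).trans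
    (subtypeOrEquiv _ _ ?_))
  · rw [Set.insert_eq_univ_iff, Set.range_eq_univ]
  · intro r hsurj hmiss g hg
    exact (hmiss g hg).subset (Set.mem_range.mpr ((hsurj g hg) b)) rfl

theorem card_surjective_fin_succ {n : ℕ} [Fintype β] :
    Nat.card {f : Fin (n + 1) → β // Surjective f} =
      ∑ b : β, Nat.card {g : Fin n → β // insert b (Set.range g) = Set.univ} := by
  rw [← Nat.card_sigma]
  refine Nat.card_congr (((Fin.consEquiv fun _ => β).symm.subtypeEquiv fun f => ?_).trans
    (Equiv.subtypeProdEquivSigmaSubtype fun b g => insert b (Set.range g) = Set.univ))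
  rw [← Set.range_eq_univ, Fin.range_fin_succ]
  rfl

end Surjections

theorem N_zero_zero : N 0 0 = 1 :=
  Nat.card_eq_one_iff_exists.2
    ⟨⟨finZeroElim, fun i => i.elim0⟩, fun _ => Subtype.ext (funext fun i => i.elim0)⟩

theorem N_eq_zero_of_lt {k ℓ : ℕ} (h : ℓ < k) : N k ℓ = 0 :=
  Nat.card_eq_zero.2 <| .inl
    ⟨fun ⟨f, hf⟩ => (Fintype.card_le_of_surjective f hf).not_gt (by simpa using h)⟩

theorem N_succ (k n : ℕ) : N k (n + 1) = k * (N k n + N (k - 1) n) := by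
  have hcompl (b : Fin k) :
      Nat.card {g : Fin n → ({b}ᶜ : Set (Fin k)) // Surjective g} = N (k - 1) n :=
    card_surjective_congr (Finite.equivFinOfCardEq (by simp [filter_ne']))
  simp only [N, card_surjective_fin_succ, card_insert_range_eq_univ, hcompl, sum_const, card_univ,
    Fintype.card_fin, smul_eq_mul]

theorem sum_range_neg_one_pow_mul_N {n m : ℕ} (h : n < m) :
    ∑ k ∈ range m, (-1 : ℤ) ^ k * N k n = (-1) ^ n := by
  induction n generalizing m with
  | zero =>
    rw [sum_eq_single_of_mem 0 (mem_range.2 h) fun k _ hk => by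
      rw [N_eq_zero_of_lt (Nat.pos_of_ne_zero hk), Nat.cast_zero, mul_zero]]
    simp [N_zero_zero]
  | succ n ih =>
    obtain ⟨m, rfl⟩ := Nat.exists_eq_add_one_of_ne_zero (by omega : m ≠ 0)
    calc ∑ k ∈ range (m + 1), (-1 : ℤ) ^ k * N k (n + 1)
        = ∑ k ∈ range (m + 1), (-1 : ℤ) ^ k * (k * N k n)
            + ∑ j ∈ range m, (-1 : ℤ) ^ (j + 1) * ((j + 1) * N j n) := by
          simp only [N_succ, Nat.cast_mul, Nat.cast_add, mul_add, sum_add_distrib]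
          rw [sum_range_succ' (fun k => (-1 : ℤ) ^ k * (k * N (k - 1) n))]
          simp only [Nat.add_sub_cancel, Nat.cast_add, Nat.cast_one, Nat.cast_zero, zero_mul,
            mul_zero, add_zero]
      _ = ∑ j ∈ range m, -((-1 : ℤ) ^ j * N j n) := by
          rw [sum_range_succ, N_eq_zero_of_lt (by omega : n < m), Nat.cast_zero, mul_zero, mul_zero,
            add_zero, ← sum_add_distrib]
          exact sum_congr rfl fun j _ => by ring
      _ = (-1) ^ (n + 1) := by rw [sum_neg_distrib, ih (by omega), pow_succ, mul_neg_one]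

theorem alternating_sum_N_recurrence (ℓ : ℕ) (hℓ : 1 ≤ ℓ) :
    ∑ k ∈ Finset.range (ℓ + 1), (-1 : ℤ) ^ (k + 1) * N k ℓ =
      - ∑ k ∈ Finset.range (ℓ + 1), (-1 : ℤ) ^ (k + 1) * N k (ℓ - 1) := by
  obtain ⟨n, rfl⟩ : ∃ n, ℓ = n + 1 := ⟨ℓ - 1, by omega⟩
  have hsign (k ℓ : ℕ) : (-1 : ℤ) ^ (k + 1) * N k ℓ = -((-1) ^ k * N k ℓ) := by ring
  simp only [hsign, sum_neg_distrib, Nat.add_sub_cancel]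
  rw [sum_range_neg_one_pow_mul_N (by omega), sum_range_neg_one_pow_mul_N (by omega), pow_succ]
  ring
end

section
/- Let b : Fin n → ℕ be a monomial exponent vector that is NOT multiplicity free (some b_i ≥ 2) but with at least one index where b_i = 1. Consider ordered tuples (b_1,…,b_k) of nonzero exponent vectors with pairwise disjoint supports, summing to b, such that b_1,…,b_{k-1} are multiplicity free (all entries ≤ 1). Then the alternating count ∑_{k≥0} (-1)^{k+1} · #{such tuples of length k} equals 0. -/
/-!
Split the tuples with `k + 1` parts according to whether their last part has an entry equal
to `1`. An entry `b i ≥ 2` can only lie in the last part, so splitting off the unit entries of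
the last part as a new multiplicity-free part is a bijection from the tuples whose last part
has a unit entry onto the tuples with `k + 2` parts whose last part has none; its inverse
merges the last two parts. Hence the counts telescope, and both boundary terms vanish: a
one-part tuple is `b` itself, which has an entry `1`, and no tuple has more than `n` parts.
-/

/-- Ordered tuples `(f 0, …, f (k-1))` of nonzero exponent vectors in `ℕ^n` with
pairwise disjoint supports, summing to `b`, in which all parts except possibly the
last one are multiplicity free (all entries `≤ 1`). -/
def TupleSet (n k : ℕ) (b : Fin n → ℕ) : Set (Fin k → Fin n → ℕ) :=
  {f | (∀ j, f j ≠ 0) ∧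
       (∀ j j', j ≠ j' → ∀ i, f j i = 0 ∨ f j' i = 0) ∧
       (∑ j, f j) = b ∧
       (∀ j : Fin k, (j : ℕ) + 1 < k → ∀ i, f j i ≤ 1)}

open Finset

section

variable {n k : ℕ} {b p q x : Fin n → ℕ}

def IsBlock (b v : Fin n → ℕ) : Prop := v ≠ 0 ∧ ∀ i, v i = 0 ∨ v i = b i

lemma IsBlock.eq_zero_or_eq_zero_of_add_le (hp : IsBlock b p) (hq : IsBlock b q)
    (hle : p + q ≤ b) (i : Fin n) : p i = 0 ∨ q i = 0 := by
  have := hle i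
  rcases hp.2 i with h | h <;> rcases hq.2 i with h' | h' <;> simp_all

lemma IsBlock.add (hp : IsBlock b p) (hq : IsBlock b q) (hle : p + q ≤ b) :
    IsBlock b (p + q) := by
  refine ⟨fun h => hp.1 (le_antisymm (h ▸ le_self_add) bot_le), fun i => ?_⟩
  have := hle i
  rcases hp.2 i with h | h <;> rcases hq.2 i with h' | h' <;> simp_all

/-- Once the parts sum to `b`, their supports are pairwise disjoint exactly when each part
agrees with `b` on its own support. -/
lemma mem_tupleSet_iff {f : Fin k → Fin n → ℕ} :
    f ∈ TupleSet n k b ↔ (∀ j, IsBlock b (f j)) ∧ ∑ j, f j = b ∧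
      ∀ j : Fin k, (j : ℕ) + 1 < k → ∀ i, f j i ≤ 1 := by
  refine ⟨fun ⟨hne, hdisj, hsum, hmf⟩ => ⟨fun j => ⟨hne j, fun i => ?_⟩, hsum, hmf⟩,
    fun ⟨hblock, hsum, hmf⟩ => ⟨fun j => (hblock j).1, fun j j' hjj' i => ?_, hsum, hmf⟩⟩
  · rw [or_iff_not_imp_left, ← hsum, Finset.sum_apply]
    intro hj
    refine (sum_eq_single (f := fun c => f c i) j (fun j' _ hj' => ?_)
      (absurd (mem_univ j))).symm
    exact (hdisj j' j hj' i).resolve_right hj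
  · have hpair : f j i + f j' i ≤ b i := by
      rw [← hsum, Finset.sum_apply, ← sum_pair (f := fun c => f c i) hjj']
      exact sum_le_sum_of_subset (subset_univ _)
    rcases (hblock j).2 i with h | h <;> rcases (hblock j').2 i with h' | h' <;> omega

lemma snoc_mem_tupleSet_iff {g : Fin k → Fin n → ℕ} :
    Fin.snoc g x ∈ TupleSet n (k + 1) b ↔ (∀ j, IsBlock b (g j)) ∧ IsBlock b x ∧
      ∑ j, g j + x = b ∧ ∀ j i, g j i ≤ 1 := by
  simp [mem_tupleSet_iff, Fin.forall_fin_succ', Fin.sum_univ_castSucc, and_assoc]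

lemma tupleSet_finite : (TupleSet n k b).Finite := by
  refine (Set.finite_Iic fun _ => b).subset fun f hf j => ?_
  rw [← hf.2.2.1]
  exact single_le_sum (fun _ _ => zero_le) (mem_univ j)

lemma le_of_mem_tupleSet {f : Fin k → Fin n → ℕ} (hf : f ∈ TupleSet n k b) : k ≤ n := by
  choose i hi using fun j => Function.ne_iff.mp (hf.1 j)
  have hinj : Function.Injective i := fun j j' hjj' => by
    by_contra hne
    rcases hf.2.1 j j' hne (i j) with h | h
    · exact hi j h
    · exact hi j' (hjj' ▸ h)
  simpa using Fintype.card_le_of_injective i hinj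

lemma tupleSet_zero_eq_empty (hb : b ≠ 0) : TupleSet n 0 b = ∅ :=
  Set.eq_empty_of_forall_notMem fun _ hf => hb (by simpa using hf.2.2.1.symm)

lemma apply_eq_of_snoc_mem_tupleSet {g : Fin k → Fin n → ℕ}
    (hf : Fin.snoc g x ∈ TupleSet n (k + 1) b) {i : Fin n} (hi : 2 ≤ b i) : x i = b i := by
  obtain ⟨hg, hx, hsum, hmf⟩ := snoc_mem_tupleSet_iff.mp hf
  refine (hx.2 i).resolve_left fun hx0 => ?_
  have hgi : ∑ j, g j i ≠ 0 := by
    have := congrFun hsum i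
    simp only [Pi.add_apply, Finset.sum_apply, hx0] at this
    omega
  obtain ⟨j, -, hj⟩ := exists_ne_zero_of_sum_ne_zero hgi
  have := hmf j i
  rcases (hg j).2 i with h | h <;> omega

def unitPart (x : Fin n → ℕ) : Fin n → ℕ := fun i => if x i = 1 then 1 else 0

def nonunitPart (x : Fin n → ℕ) : Fin n → ℕ := fun i => if x i = 1 then 0 else x i

lemma unitPart_add_nonunitPart (x : Fin n → ℕ) : unitPart x + nonunitPart x = x := by
  ext i
  simp only [unitPart, nonunitPart, Pi.add_apply]
  split_ifs <;> omega

lemma unitPart_add_nonunitPart_of_disjoint (hp : ∀ i, p i ≤ 1)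
    (hq : ∀ i, q i ≠ 1) (hpq : ∀ i, p i = 0 ∨ q i = 0) :
    unitPart (p + q) = p ∧ nonunitPart (p + q) = q := by
  constructor <;> ext i <;> have := hp i <;> have := hq i <;>
    simp only [unitPart, nonunitPart, Pi.add_apply] <;> rcases hpq i with h | h <;>
    split_ifs <;> omega

lemma unitPart_le_one (x : Fin n → ℕ) (i : Fin n) : unitPart x i ≤ 1 := by
  unfold unitPart; split_ifs <;> omega

lemma nonunitPart_ne_one (x : Fin n → ℕ) (i : Fin n) : nonunitPart x i ≠ 1 := by
  unfold nonunitPart; split_ifs <;> omega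

lemma IsBlock.unitPart (hx : IsBlock b x) (h : ∃ i, x i = 1) :
    IsBlock b (unitPart x) := by
  obtain ⟨i₁, hi₁⟩ := h
  refine ⟨Function.ne_iff.mpr ⟨i₁, by simp [_root_.unitPart, hi₁]⟩, fun i => ?_⟩
  rcases hx.2 i with h | h <;> simp only [_root_.unitPart] <;> split_ifs <;> omega

lemma IsBlock.nonunitPart (hx : IsBlock b x) (h : ∃ i, 2 ≤ x i) :
    IsBlock b (nonunitPart x) := by
  obtain ⟨i₂, hi₂⟩ := h
  refine ⟨Function.ne_iff.mpr ⟨i₂, by simp [_root_.nonunitPart]; omega⟩, fun i => ?_⟩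
  rcases hx.2 i with h | h <;> simp only [_root_.nonunitPart] <;> split_ifs <;> omega

def splitLast (f : Fin (k + 1) → Fin n → ℕ) : Fin (k + 2) → Fin n → ℕ :=
  Fin.snoc (Fin.snoc (Fin.init f) (unitPart (f (Fin.last k)))) (nonunitPart (f (Fin.last k)))

def mergeLast (f : Fin (k + 2) → Fin n → ℕ) : Fin (k + 1) → Fin n → ℕ :=
  Fin.snoc (Fin.init (Fin.init f)) (Fin.init f (Fin.last k) + f (Fin.last (k + 1)))

lemma splitLast_snoc (g : Fin k → Fin n → ℕ) (x : Fin n → ℕ) :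
    splitLast (Fin.snoc g x) = Fin.snoc (Fin.snoc g (unitPart x)) (nonunitPart x) := by
  simp [splitLast]

lemma mergeLast_snoc_snoc (g : Fin k → Fin n → ℕ) (p q : Fin n → ℕ) :
    mergeLast (Fin.snoc (Fin.snoc g p) q) = Fin.snoc g (p + q) := by
  simp [mergeLast]

lemma snoc_snoc_mem_tupleSet_iff {g : Fin k → Fin n → ℕ} :
    Fin.snoc (Fin.snoc g p) q ∈ TupleSet n (k + 2) b ↔ (∀ j, IsBlock b (g j)) ∧
      IsBlock b p ∧ IsBlock b q ∧ ∑ j, g j + (p + q) = b ∧ (∀ j i, g j i ≤ 1) ∧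
      ∀ i, p i ≤ 1 := by
  simp only [snoc_mem_tupleSet_iff, Fin.forall_fin_succ', Fin.sum_univ_castSucc,
    Fin.snoc_castSucc, Fin.snoc_last, add_assoc]
  tauto

def lastHasUnit (n k : ℕ) : Set (Fin (k + 1) → Fin n → ℕ) := {f | ∃ i, f (Fin.last k) i = 1}

lemma mapsTo_mergeLast :
    Set.MapsTo mergeLast (TupleSet n (k + 2) b \ lastHasUnit n (k + 1))
      (TupleSet n (k + 1) b ∩ lastHasUnit n k) := by
  intro f ⟨hf, hunit⟩
  induction f using Fin.snocCases with | _ f q => ?_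
  induction f using Fin.snocCases with | _ g p => ?_
  obtain ⟨hg, hp, hq, hsum, hgmf, hpmf⟩ := snoc_snoc_mem_tupleSet_iff.mp hf
  simp only [lastHasUnit, Set.mem_ofPred_eq, Fin.snoc_last, not_exists] at hunit
  have hle : p + q ≤ b := hsum ▸ le_add_self
  rw [mergeLast_snoc_snoc]
  refine ⟨snoc_mem_tupleSet_iff.mpr ⟨hg, hp.add hq hle, hsum, hgmf⟩, ?_⟩
  obtain ⟨i, hi⟩ := Function.ne_iff.mp hp.1
  refine ⟨i, ?_⟩
  have := hpmf i
  have := hunit i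
  simp only [Fin.snoc_last, Pi.add_apply]
  rcases hp.2 i with h | h <;> rcases hq.2 i with h' | h' <;> simp_all <;> omega

lemma mapsTo_splitLast (hb : ∃ i, 2 ≤ b i) :
    Set.MapsTo splitLast (TupleSet n (k + 1) b ∩ lastHasUnit n k)
      (TupleSet n (k + 2) b \ lastHasUnit n (k + 1)) := by
  intro f ⟨hf, hunit⟩
  induction f using Fin.snocCases with | _ g x => ?_
  obtain ⟨hg, hx, hsum, hgmf⟩ := snoc_mem_tupleSet_iff.mp hf
  obtain ⟨i₁, hi₁⟩ := hunit
  obtain ⟨i₂, hi₂⟩ := hb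
  simp only [Fin.snoc_last] at hi₁
  rw [splitLast_snoc]
  refine ⟨snoc_snoc_mem_tupleSet_iff.mpr ⟨hg, hx.unitPart ⟨i₁, hi₁⟩, hx.nonunitPart ⟨i₂, ?_⟩,
    by rwa [unitPart_add_nonunitPart], hgmf, unitPart_le_one x⟩, ?_⟩
  · rwa [apply_eq_of_snoc_mem_tupleSet hf hi₂]
  · rintro ⟨i, hi⟩
    exact nonunitPart_ne_one x i (by simpa using hi)

lemma splitLast_mergeLast {f : Fin (k + 2) → Fin n → ℕ}
    (hf : f ∈ TupleSet n (k + 2) b \ lastHasUnit n (k + 1)) : splitLast (mergeLast f) = f := by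
  obtain ⟨hf, hunit⟩ := hf
  induction f using Fin.snocCases with | _ f q => ?_
  induction f using Fin.snocCases with | _ g p => ?_
  obtain ⟨-, hp, hq, hsum, -, hpmf⟩ := snoc_snoc_mem_tupleSet_iff.mp hf
  simp only [lastHasUnit, Set.mem_ofPred_eq, Fin.snoc_last, not_exists] at hunit
  obtain ⟨hunitPart, hnonunitPart⟩ := unitPart_add_nonunitPart_of_disjoint hpmf hunit
    (hp.eq_zero_or_eq_zero_of_add_le hq (hsum ▸ le_add_self))
  rw [mergeLast_snoc_snoc, splitLast_snoc, hunitPart, hnonunitPart]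

lemma ncard_tupleSet_diff_lastHasUnit_succ (hb : ∃ i, 2 ≤ b i) :
    (TupleSet n (k + 2) b \ lastHasUnit n (k + 1)).ncard =
      (TupleSet n (k + 1) b ∩ lastHasUnit n k).ncard :=
  Set.BijOn.ncard_eq <| Set.InvOn.bijOn
    ⟨fun _ hf => splitLast_mergeLast hf, fun f _ => by
      induction f using Fin.snocCases with
      | _ g x => rw [splitLast_snoc, mergeLast_snoc_snoc, unitPart_add_nonunitPart]⟩
    mapsTo_mergeLast (mapsTo_splitLast hb)

end

lemma sum_range_neg_one_pow_mul_add_succ {R : Type*} [CommRing R] (y : ℕ → R) (m : ℕ) :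
    ∑ k ∈ range m, (-1) ^ k * (y (k + 1) + y k) = y 0 - (-1) ^ m * y m := by
  convert sum_range_sub (fun k => -(-1) ^ k * y k) m using 1
  · exact sum_congr rfl fun k _ => by ring
  · ring

/-- If `b` is not multiplicity free (some entry `≥ 2`) but has at least one entry equal
to `1`, then the alternating count of ordered tuples of nonzero exponent vectors with
pairwise disjoint supports summing to `b`, all but the last multiplicity free, is `0`. -/
theorem alternating_count_NMF_zero (n : ℕ) (b : Fin n → ℕ)
    (hNMF : ∃ i, 2 ≤ b i) (hhat : ∃ i, b i = 1) :
    ∑ k ∈ Finset.range (n + 1), (-1 : ℤ) ^ (k + 1) * Nat.card (TupleSet n k b) = 0 := by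
  obtain ⟨i, hi⟩ := hhat
  have hb : b ≠ 0 := Function.ne_iff.mpr ⟨i, by simp [hi]⟩
  set y : ℕ → ℤ := fun k => ((TupleSet n (k + 1) b \ lastHasUnit n k).ncard : ℤ)
  have hy₀ : y 0 = 0 := by
    suffices TupleSet n 1 b \ lastHasUnit n 0 = ∅ by simp [y, this]
    refine Set.eq_empty_of_forall_notMem fun f ⟨hf, hunit⟩ => hunit ⟨i, ?_⟩
    simpa [← hf.2.2.1] using hi
  have hy : y n = 0 := by
    suffices TupleSet n (n + 1) b = ∅ by simp [y, this]
    exact Set.eq_empty_of_forall_notMem fun f hf => by simpa using le_of_mem_tupleSet hf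
  have hcard (k : ℕ) : (Nat.card (TupleSet n (k + 1) b) : ℤ) = y (k + 1) + y k := by
    rw [Nat.card_coe_set_eq, ← Set.ncard_inter_add_ncard_sdiff_eq_ncard _ (lastHasUnit n k)
      tupleSet_finite, ← ncard_tupleSet_diff_lastHasUnit_succ hNMF]
    push_cast
    ring
  rw [sum_range_succ', tupleSet_zero_eq_empty hb]
  simp only [hcard, pow_succ, mul_neg_one, neg_neg]
  simp [sum_range_neg_one_pow_mul_add_succ, hy₀, hy]
end

section
/- If b is NMF (some entry ≥ 2) and b̂ ≠ 0 (where b̂ records the indices with entry exactly 1), then δ_b(E - 1) + ∑_{0 ≠ a' ≤ b̂} (−λ_{b−a'} δ_{a'})(E_{a'} − 1) = δ_b (E − E_{b̂}), where for a' ≤ b̂, E_{a'} = ∏_{i∈supp(a')} e_i, E = E_b = ∏_i e_i^{b_i}, and E_{b̂} = ∏_{i: b_i = 1} e_i. -/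
/-- `toddCoeff m` : the coefficient `t_m` of `x^m` in `x / (1 - e^{-x})`. -/
noncomputable def toddCoeff (m : ℕ) : ℚ := bernoulli' m / m.factorial

/-- `deltaCoeff b = δ_b = ∏_i t_{b_i}`. -/
noncomputable def deltaCoeff {n : ℕ} (b : Fin n → ℕ) : ℚ := ∏ i, toddCoeff (b i)

/-- `lambdaCoeff b = λ_b = ∑_{k ≥ 0} (-1)^{k+1} ∑_{(b_1,…,b_k)} ∏_j δ_{b_j}`, the sum
over ordered tuples of nonzero exponent vectors with pairwise disjoint supports summing
to `b`, all but the last part multiplicity free.  (Tuples of length `k > n` do not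
exist, so the sum over `k ∈ [0, n]` accounts for all tuples.) -/
noncomputable def lambdaCoeff {n : ℕ} (b : Fin n → ℕ) : ℚ :=
  ∑ k ∈ Finset.range (n + 1), (-1 : ℚ) ^ (k + 1) *
    ∑ᶠ f ∈ TupleSet n k b, ∏ j, deltaCoeff (f j)

open Finset

lemma toddCoeff_zero : toddCoeff 0 = 1 := by simp [toddCoeff]
lemma toddCoeff_one : toddCoeff 1 = 1/2 := by simp [toddCoeff, bernoulli'_one]

abbrev indFn {n : ℕ} (S : Finset (Fin n)) : Fin n → ℕ := fun i => if i ∈ S then 1 else 0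

lemma tsFinite (n k : ℕ) (b : Fin n → ℕ) : (TupleSet n k b).Finite := by
  apply Set.Finite.subset
    (Set.Finite.pi (fun _ : Fin k => Set.Finite.pi (fun i : Fin n => Set.finite_Iic (b i))))
  intro f hf
  simp only [Set.mem_pi, Set.mem_univ, Set.mem_Iic, forall_true_left]
  intro j i
  have hsum := congrFun hf.2.2.1 i
  rw [Finset.sum_apply] at hsum
  calc f j i ≤ ∑ j', f j' i := Finset.single_le_sum (f := fun j' => f j' i) (fun _ _ => Nat.zero_le _) (mem_univ j)
    _ = b i := hsum

noncomputable def tSum (n k : ℕ) (b : Fin n → ℕ) : ℚ :=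
  ∑ f ∈ (tsFinite n k b).toFinset, ∏ j, deltaCoeff (f j)

lemma lambdaCoeff_eq {n : ℕ} (b : Fin n → ℕ) :
    lambdaCoeff b = ∑ k ∈ range (n+1), (-1:ℚ)^(k+1) * tSum n k b := by
  unfold lambdaCoeff tSum
  exact Finset.sum_congr rfl fun k _ => by
    rw [finsum_mem_eq_finite_toFinset_sum _ (tsFinite n k b)]

lemma sum_apply_at {n k : ℕ} (f : Fin k → Fin n → ℕ) (i : Fin n) :
    (∑ j, f j) i = ∑ j, f j i := Finset.sum_apply i univ f

lemma tSum_zero {n : ℕ} (b : Fin n → ℕ) (hb : b ≠ 0) : tSum n 0 b = 0 := by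
  unfold tSum
  have : (tsFinite n 0 b).toFinset = ∅ := by
    ext f
    simp only [Set.Finite.mem_toFinset, Finset.notMem_empty, iff_false]
    rintro ⟨-, -, hsum, -⟩
    exact hb (hsum ▸ (by simp : (∑ j : Fin 0, f j) = 0).symm ▸ rfl)
  rw [this, Finset.sum_empty]

lemma tSum_one {n : ℕ} (b : Fin n → ℕ) (hb : b ≠ 0) : tSum n 1 b = deltaCoeff b := by
  unfold tSum
  have : (tsFinite n 1 b).toFinset = {fun _ => b} := by
    ext f
    simp only [Set.Finite.mem_toFinset, Finset.mem_singleton]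
    constructor
    · rintro ⟨-, -, hsum, -⟩
      rw [Fin.sum_univ_one] at hsum
      funext j
      rw [Subsingleton.elim j 0, hsum]
    · rintro rfl
      refine ⟨fun _ => hb, fun j j' hjj' => absurd (Subsingleton.elim j j') hjj', ?_, ?_⟩
      · rw [Fin.sum_univ_one]
      · intro j hj; omega
  rw [this, Finset.sum_singleton, deltaCoeff]
  exact Fin.prod_univ_one _

lemma tSum_noOne {n : ℕ} (c : Fin n → ℕ) (hc : ∀ i, c i ≠ 1) (k : ℕ) :
    tSum n (k+2) c = 0 := by
  unfold tSum
  have : (tsFinite n (k+2) c).toFinset = ∅ := by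
    ext f
    simp only [Set.Finite.mem_toFinset, Finset.notMem_empty, iff_false]
    rintro ⟨hne, hdisj, hsum, hmf⟩
    obtain ⟨i, hi⟩ := Function.ne_iff.mp (hne 0)
    have h1 : f 0 i = 1 := by
      have := hmf 0 (by simp) i
      simp only [Pi.zero_apply] at hi
      omega
    have hci : c i = 1 := by
      have hs := congrFun hsum i
      rw [sum_apply_at] at hs
      rw [← hs, Finset.sum_eq_single_of_mem 0 (mem_univ _), h1]
      intro j _ hj
      rcases hdisj j 0 hj i with h | h
      · exact h
      · rw [h1] at h; omega
    exact hc i hci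
  rw [this, Finset.sum_empty]

lemma tSum_top {n : ℕ} (d : Fin n → ℕ) (i0 : Fin n) (hd : d i0 = 0) : tSum n n d = 0 := by
  unfold tSum
  have : (tsFinite n n d).toFinset = ∅ := by
    ext f
    simp only [Set.Finite.mem_toFinset, Finset.notMem_empty, iff_false]
    rintro ⟨hne, hdisj, hsum, -⟩
    choose g hg using fun j => Function.ne_iff.mp (hne j)
    simp only [Pi.zero_apply] at hg
    have hinj : Function.Injective g := by
      intro j j' h
      by_contra hne'
      rcases hdisj j j' hne' (g j) with h1 | h1
      · exact hg j h1
      · rw [h] at h1; exact hg j' h1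
    obtain ⟨j0, hj0⟩ := (Finite.injective_iff_surjective.mp hinj) i0
    have hs := congrFun hsum i0
    rw [sum_apply_at] at hs
    have : f j0 i0 = 0 := by
      have := Finset.sum_eq_zero_iff.mp (hs.trans hd) j0 (mem_univ _)
      exact this
    rw [← hj0] at this
    exact hg j0 this
  rw [this, Finset.sum_empty]
abbrev cands {n : ℕ} (c : Fin n → ℕ) : Finset (Finset (Fin n)) :=
  (univ.filter fun i => c i = 1).powerset.filter fun S => S ≠ ∅

lemma deltaCoeff_indFn {n : ℕ} (S : Finset (Fin n)) :
    deltaCoeff (indFn S) = (1/2 : ℚ) ^ S.card := by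
  unfold deltaCoeff indFn
  have : ∀ i : Fin n, toddCoeff (if i ∈ S then 1 else 0)
      = if i ∈ S then (1/2 : ℚ) else 1 := by
    intro i; split <;> simp [toddCoeff_one, toddCoeff_zero]
  rw [Finset.prod_congr rfl fun i _ => this i, ← Finset.prod_filter, Finset.prod_const,
    Finset.filter_mem_eq_inter, Finset.univ_inter]

section Decomp
variable {n k : ℕ} {c : Fin n → ℕ}

lemma fzero_eq {f : Fin (k+2) → Fin n → ℕ} (hf : f ∈ TupleSet n (k+2) c) :
    f 0 = indFn (univ.filter fun i => f 0 i ≠ 0) := by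
  funext i
  by_cases h : f 0 i = 0
  · simp [indFn, h]
  · have h1 : f 0 i = 1 := by
      have := hf.2.2.2 0 (by simp) i; omega
    simp [indFn, h, h1]

lemma cOne_of {f : Fin (k+2) → Fin n → ℕ} (hf : f ∈ TupleSet n (k+2) c) {i : Fin n}
    (hi : f 0 i ≠ 0) : c i = 1 := by
  have h1 : f 0 i = 1 := by have := hf.2.2.2 0 (by simp) i; omega
  have hs := congrFun hf.2.2.1 i
  rw [sum_apply_at] at hs
  rw [← hs, Finset.sum_eq_single_of_mem 0 (mem_univ _), h1]
  intro j _ hj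
  rcases hf.2.1 j 0 hj i with h | h
  · exact h
  · exact absurd h hi

lemma Sf_mem {f : Fin (k+2) → Fin n → ℕ} (hf : f ∈ TupleSet n (k+2) c) :
    (univ.filter fun i => f 0 i ≠ 0) ∈ cands c := by
  rw [cands, Finset.mem_filter, Finset.mem_powerset]
  constructor
  · intro i hi
    rw [Finset.mem_filter] at hi ⊢
    exact ⟨mem_univ _, cOne_of hf hi.2⟩
  · obtain ⟨i, hi⟩ := Function.ne_iff.mp (hf.1 0)
    simp only [Pi.zero_apply] at hi
    intro h
    have : i ∈ (univ.filter fun i => f 0 i ≠ 0) := by simp [hi]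
    rw [h] at this
    exact absurd this (Finset.notMem_empty i)

lemma tail_mem {f : Fin (k+2) → Fin n → ℕ} (hf : f ∈ TupleSet n (k+2) c) :
    Fin.tail f ∈ TupleSet n (k+1) (c - indFn (univ.filter fun i => f 0 i ≠ 0)) := by
  refine ⟨fun j => hf.1 j.succ,
    fun j j' hjj' => hf.2.1 j.succ j'.succ (fun h => hjj' (Fin.succ_injective _ h)), ?_, ?_⟩
  · funext i
    rw [sum_apply_at]
    have hs := congrFun hf.2.2.1 i
    rw [sum_apply_at, Fin.sum_univ_succ] at hs
    have hf0 : f 0 i = indFn (univ.filter fun i => f 0 i ≠ 0) i := congrFun (fzero_eq hf) i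
    simp only [Pi.sub_apply, Fin.tail]
    omega
  · intro j hj i
    exact hf.2.2.2 j.succ (by simpa [Fin.val_succ] using Nat.add_lt_add_right hj 1) i

lemma cons_mem {S : Finset (Fin n)} (hS : S ∈ cands c) {g : Fin (k+1) → Fin n → ℕ}
    (hg : g ∈ TupleSet n (k+1) (c - indFn S)) :
    Fin.cons (indFn S) g ∈ TupleSet n (k+2) c := by
  rw [cands, Finset.mem_filter, Finset.mem_powerset] at hS
  have hci : ∀ i ∈ S, c i = 1 := by
    intro i hi
    have := hS.1 hi
    rw [Finset.mem_filter] at this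
    exact this.2
  have hgz : ∀ (j : Fin (k+1)) (i : Fin n), i ∈ S → g j i = 0 := by
    intro j i hi
    have hs := congrFun hg.2.2.1 i
    rw [sum_apply_at] at hs
    have : (c - indFn S) i = 0 := by
      simp only [Pi.sub_apply, indFn, if_pos hi, hci i hi]
    exact Finset.sum_eq_zero_iff.mp (hs.trans this) j (mem_univ _)
  constructor
  · intro j
    refine Fin.cases ?_ (fun j' => ?_) j
    · obtain ⟨i, hi⟩ := Finset.nonempty_iff_ne_empty.mpr hS.2
      intro h
      have := congrFun h i
      simp only [Fin.cons_zero, indFn, if_pos hi, Pi.zero_apply] at this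
      exact one_ne_zero this
    · simpa [Fin.cons_succ] using hg.1 j'
  refine ⟨?_, ?_, ?_⟩
  · intro j j' hjj' i
    rcases Fin.eq_zero_or_eq_succ j with rfl | ⟨a, rfl⟩ <;>
      rcases Fin.eq_zero_or_eq_succ j' with rfl | ⟨a', rfl⟩
    · exact absurd rfl hjj'
    · by_cases hiS : i ∈ S
      · exact Or.inr (by rw [Fin.cons_succ]; exact hgz a' i hiS)
      · exact Or.inl (by simp [Fin.cons_zero, indFn, hiS])
    · by_cases hiS : i ∈ S
      · exact Or.inl (by rw [Fin.cons_succ]; exact hgz a i hiS)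
      · exact Or.inr (by simp [Fin.cons_zero, indFn, hiS])
    · simpa [Fin.cons_succ] using hg.2.1 a a' (fun h => hjj' (by rw [h])) i
  · funext i
    rw [sum_apply_at, Fin.sum_univ_succ]
    simp only [Fin.cons_zero, Fin.cons_succ]
    have hs := congrFun hg.2.2.1 i
    rw [sum_apply_at] at hs
    rw [hs]
    by_cases hiS : i ∈ S
    · have := hci i hiS
      simp [indFn, hiS, this]
    · simp [indFn, hiS]
  · intro j hj i
    rcases Fin.eq_zero_or_eq_succ j with rfl | ⟨a, rfl⟩
    · simp only [Fin.cons_zero, indFn]; split <;> omega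
    · rw [Fin.cons_succ]
      refine hg.2.2.2 a ?_ i
      simp only [Fin.val_succ] at hj
      omega
lemma tSum_succ_succ {n : ℕ} (c : Fin n → ℕ) (k : ℕ) :
    tSum n (k+2) c = ∑ S ∈ cands c, (1/2:ℚ)^S.card * tSum n (k+1) (c - indFn S) := by
  unfold tSum
  simp only [Finset.mul_sum]
  conv_rhs => rw [Finset.sum_sigma']
  refine Finset.sum_nbij' (fun f => ⟨univ.filter fun i => f 0 i ≠ 0, Fin.tail f⟩)
    (fun p => Fin.cons (indFn p.1) p.2) ?_ ?_ ?_ ?_ ?_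
  · intro f hf
    rw [Set.Finite.mem_toFinset] at hf
    rw [Finset.mem_sigma]
    exact ⟨Sf_mem hf, (Set.Finite.mem_toFinset _).mpr (tail_mem hf)⟩
  · rintro ⟨S, g⟩ hp
    rw [Finset.mem_sigma, Set.Finite.mem_toFinset] at hp
    rw [Set.Finite.mem_toFinset]
    exact cons_mem hp.1 hp.2
  · intro f hf
    rw [Set.Finite.mem_toFinset] at hf
    show Fin.cons (indFn _) (Fin.tail f) = f
    rw [← fzero_eq hf, Fin.cons_self_tail]
  · rintro ⟨S, g⟩ hp
    rw [Finset.mem_sigma, Set.Finite.mem_toFinset] at hp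
    have hS : (univ.filter fun i => (Fin.cons (indFn S) g : Fin (k+2) → Fin n → ℕ) 0 i ≠ 0) = S := by
      ext i
      simp only [Finset.mem_filter, Finset.mem_univ, true_and, Fin.cons_zero, indFn]
      split <;> simp_all
    simp only [hS, Fin.tail_cons]
  · intro f hf
    rw [Set.Finite.mem_toFinset] at hf
    rw [Fin.prod_univ_succ]
    have h0 : deltaCoeff (f 0)
        = (1/2:ℚ)^(univ.filter fun i => f 0 i ≠ 0).card :=
      (congrArg deltaCoeff (fzero_eq hf)).trans (deltaCoeff_indFn _)
    rw [h0]
    rfl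
lemma lambda_noOne {n : ℕ} (c : Fin n → ℕ) (hc0 : c ≠ 0) (hc : ∀ i, c i ≠ 1) :
    lambdaCoeff c = deltaCoeff c := by
  obtain ⟨i0, hi0⟩ := Function.ne_iff.mp hc0
  have hn : n ≠ 0 := fun h => (h ▸ i0).elim0
  obtain ⟨m, rfl⟩ : ∃ m, n = m + 1 := ⟨n - 1, by omega⟩
  rw [lambdaCoeff_eq, Finset.sum_range_succ', Finset.sum_range_succ',
    tSum_zero c hc0, tSum_one c hc0]
  have : ∀ k ∈ range m, (-1:ℚ)^(k+1+1+1) * tSum (m+1) (k+1+1) c = 0 := by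
    intro k _
    have e : tSum (m+1) (k+1+1) c = 0 := tSum_noOne c hc k
    rw [e, mul_zero]
  rw [Finset.sum_congr rfl this, Finset.sum_const_zero]
  ring

lemma lambda_rec {n : ℕ} (c : Fin n → ℕ) (h2 : ∃ i0, 2 ≤ c i0) :
    lambdaCoeff c = deltaCoeff c
      - ∑ S ∈ cands c, (1/2:ℚ)^S.card * lambdaCoeff (c - indFn S) := by
  obtain ⟨i0, hi0⟩ := h2
  have hn : n ≠ 0 := fun h => (h ▸ i0).elim0
  obtain ⟨m, rfl⟩ : ∃ m, n = m + 1 := ⟨n - 1, by omega⟩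
  have hc0 : c ≠ 0 := fun h => by simp [h] at hi0
  have hsub : ∀ S ∈ cands c, S ⊆ univ.filter fun i => c i = 1 := by
    intro S hS; rw [cands, Finset.mem_filter, Finset.mem_powerset] at hS; exact hS.1
  have hS0 : ∀ S ∈ cands c, tSum (m+1) 0 (c - indFn S) = 0 := by
    intro S hS
    apply tSum_zero
    intro h
    have hh := congrFun h i0
    have hi0S : i0 ∉ S := fun hmem => by
      have := (Finset.mem_filter.mp (hsub S hS hmem)).2; omega
    simp only [Pi.sub_apply, indFn, if_neg hi0S, Pi.zero_apply] at hh
    omega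
  have hStop : ∀ S ∈ cands c, tSum (m+1) (m+1) (c - indFn S) = 0 := by
    intro S hS
    have hS' := hS
    rw [cands, Finset.mem_filter] at hS'
    obtain ⟨i1, hi1⟩ := Finset.nonempty_iff_ne_empty.mpr hS'.2
    have hc1 : c i1 = 1 := (Finset.mem_filter.mp (hsub S hS hi1)).2
    exact tSum_top _ i1 (by simp [indFn, hi1, hc1])
  have key : ∀ S ∈ cands c, lambdaCoeff (c - indFn S)
      = ∑ k ∈ range m, (-1:ℚ)^(k+1+1) * tSum (m+1) (k+1) (c - indFn S) := by
    intro S hS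
    rw [lambdaCoeff_eq, Finset.sum_range_succ', hS0 S hS, Finset.sum_range_succ,
      hStop S hS]
    simp
  rw [lambdaCoeff_eq, Finset.sum_range_succ', Finset.sum_range_succ',
    tSum_zero c hc0, tSum_one c hc0]
  have hmain : (∑ k ∈ range m, (-1:ℚ)^(k+1+1+1) * tSum (m+1) (k+1+1) c)
      = - ∑ S ∈ cands c, (1/2:ℚ)^S.card * lambdaCoeff (c - indFn S) := by
    have step1 : ∀ k ∈ range m, (-1:ℚ)^(k+1+1+1) * tSum (m+1) (k+1+1) c
        = ∑ S ∈ cands c,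
            -((1/2:ℚ)^S.card * ((-1:ℚ)^(k+1+1) * tSum (m+1) (k+1) (c - indFn S))) := by
      intro k _
      have e : tSum (m+1) (k+1+1) c
          = ∑ S ∈ cands c, (1/2:ℚ)^S.card * tSum (m+1) (k+1) (c - indFn S) :=
        tSum_succ_succ c k
      rw [e, Finset.mul_sum]
      exact Finset.sum_congr rfl fun S _ => by ring
    rw [Finset.sum_congr rfl step1, Finset.sum_comm, ← Finset.sum_neg_distrib]
    refine Finset.sum_congr rfl fun S hS => ?_
    rw [key S hS, Finset.mul_sum, ← Finset.sum_neg_distrib]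
  rw [hmain]
  ring
lemma delta_split {n : ℕ} (c : Fin n → ℕ) :
    deltaCoeff c = (1/2:ℚ)^((univ.filter fun i => c i = 1).card)
      * deltaCoeff (c - indFn (univ.filter fun i => c i = 1)) := by
  unfold deltaCoeff
  rw [← Finset.prod_const, Finset.prod_filter, ← Finset.prod_mul_distrib]
  refine Finset.prod_congr rfl fun i _ => ?_
  by_cases h : c i = 1
  · simp [h, indFn, toddCoeff_one, toddCoeff_zero, Pi.sub_apply]
  · simp [h, indFn, Pi.sub_apply]

lemma lambda_NMF {n : ℕ} : ∀ (m : ℕ) (c : Fin n → ℕ),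
    (univ.filter fun i => c i = 1).card = m →
    (∃ i, 2 ≤ c i) → (∃ i, c i = 1) → lambdaCoeff c = 0 := by
  intro m
  induction m using Nat.strong_induction_on with
  | _ m IH =>
    intro c hm h2 h1
    rw [lambda_rec c h2]
    have hShat_mem : (univ.filter fun i => c i = 1) ∈ cands c := by
      rw [cands, Finset.mem_filter, Finset.mem_powerset]
      refine ⟨le_refl _, ?_⟩
      obtain ⟨i, hi⟩ := h1
      intro h
      have hmem : i ∈ univ.filter fun i => c i = 1 := by simp [hi]
      rw [h] at hmem; exact absurd hmem (Finset.notMem_empty i)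
    have hothers : ∀ S ∈ cands c, S ≠ (univ.filter fun i => c i = 1) →
        (1/2:ℚ)^S.card * lambdaCoeff (c - indFn S) = 0 := by
      intro S hS hSne
      rw [cands, Finset.mem_filter, Finset.mem_powerset] at hS
      obtain ⟨i1, hi1, hni1⟩ := Finset.exists_of_ssubset (hS.1.ssubset_of_ne hSne)
      have hc1 : c i1 = 1 := by simpa using hi1
      have hsubS : ∀ i ∈ S, c i = 1 := fun i hi => by
        have := hS.1 hi; simpa using this
      have hhat' : (univ.filter fun i => (c - indFn S) i = 1)
          = (univ.filter fun i => c i = 1) \ S := by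
        ext i
        simp only [Finset.mem_filter, Finset.mem_univ, true_and, Finset.mem_sdiff,
          Pi.sub_apply, indFn]
        by_cases h : i ∈ S
        · simp [h, hsubS i h]
        · simp [h]
      have hcard : ((univ.filter fun i => c i = 1) \ S).card < m := by
        obtain ⟨iS, hiS⟩ := Finset.nonempty_iff_ne_empty.mpr hS.2
        have h1c : 1 ≤ S.card := Finset.card_pos.mpr ⟨iS, hiS⟩
        have hle : S.card ≤ (univ.filter fun i => c i = 1).card :=
          Finset.card_le_card hS.1
        rw [Finset.card_sdiff_of_subset hS.1]
        omega
      have h2' : ∃ i, 2 ≤ (c - indFn S) i := by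
        obtain ⟨i0, hi0⟩ := h2
        refine ⟨i0, ?_⟩
        have : i0 ∉ S := fun hmem => by have := hsubS i0 hmem; omega
        simp only [Pi.sub_apply, indFn, if_neg this]
        omega
      have h1' : ∃ i, (c - indFn S) i = 1 := by
        refine ⟨i1, ?_⟩
        simp only [Pi.sub_apply, indFn, if_neg hni1]
        omega
      rw [IH _ hcard _ (by rw [hhat']) h2' h1', mul_zero]
    rw [Finset.sum_eq_single_of_mem _ hShat_mem hothers]
    have hnoone : ∀ i, (c - indFn (univ.filter fun i => c i = 1)) i ≠ 1 := by
      intro i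
      by_cases h : c i = 1 <;> simp [indFn, h, Pi.sub_apply]
    have hne : (c - indFn (univ.filter fun i => c i = 1)) ≠ 0 := by
      obtain ⟨i0, hi0⟩ := h2
      intro h
      have hh := congrFun h i0
      have : i0 ∉ univ.filter fun i => c i = 1 := by simp; omega
      simp only [Pi.sub_apply, indFn, if_neg this, Pi.zero_apply] at hh
      omega
    rw [lambda_noOne _ hne hnoone, delta_split c]
    ring


/-- For `b` not multiplicity free with `b̂ ≠ 0` (where `b̂` records the indices with
entry exactly `1`) and ramification degrees `e i ≥ 1`:
`δ_b (E_b - 1) + ∑_{0 ≠ a' ≤ b̂} (-λ_{b - a'} δ_{a'}) (E_{a'} - 1) = δ_b (E_b - E_{b̂})`,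
where `E_a = ∏_i e_i ^ {a_i}`, and nonzero `a' ≤ b̂` correspond to nonempty subsets `S`
of the support of `b̂`, with `E_{a'} = ∏_{i ∈ S} e i`. -/
theorem NMF_collapse {n : ℕ} (b : Fin n → ℕ) (hNMF : ∃ i, 2 ≤ b i)
    (hhat : ∃ i, b i = 1) (e : Fin n → ℕ) (he : ∀ i, 1 ≤ e i) :
    deltaCoeff b * (∏ i, (e i : ℚ) ^ b i - 1) +
      ∑ S ∈ ((univ.filter fun i => b i = 1).powerset.filter fun S => S ≠ ∅),
        (-(lambdaCoeff (b - fun i => if i ∈ S then 1 else 0)) *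
            deltaCoeff (fun i => if i ∈ S then 1 else 0)) *
          (∏ i ∈ S, (e i : ℚ) - 1) =
    deltaCoeff b *
      (∏ i, (e i : ℚ) ^ b i - ∏ i, (e i : ℚ) ^ (if b i = 1 then 1 else 0)) := by
  have hShat_mem : (univ.filter fun i => b i = 1) ∈ cands b := by
    rw [cands, Finset.mem_filter, Finset.mem_powerset]
    refine ⟨le_refl _, ?_⟩
    obtain ⟨i, hi⟩ := hhat
    intro h
    have hmem : i ∈ univ.filter fun i => b i = 1 := by simp [hi]
    rw [h] at hmem; exact absurd hmem (Finset.notMem_empty i)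
  have hothers : ∀ S ∈ ((univ.filter fun i => b i = 1).powerset.filter fun S => S ≠ ∅),
      S ≠ (univ.filter fun i => b i = 1) →
      (-(lambdaCoeff (b - fun i => if i ∈ S then 1 else 0)) *
          deltaCoeff (fun i => if i ∈ S then 1 else 0)) * (∏ i ∈ S, (e i : ℚ) - 1) = 0 := by
    intro S hS hSne
    have hSc : S ∈ cands b := hS
    rw [cands, Finset.mem_filter, Finset.mem_powerset] at hSc
    obtain ⟨i1, hi1, hni1⟩ := Finset.exists_of_ssubset (hSc.1.ssubset_of_ne hSne)
    have hsubS : ∀ i ∈ S, b i = 1 := fun i hi => by have := hSc.1 hi; simpa using this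
    have h2' : ∃ i, 2 ≤ (b - indFn S) i := by
      obtain ⟨i0, hi0⟩ := hNMF
      refine ⟨i0, ?_⟩
      have : i0 ∉ S := fun hmem => by have := hsubS i0 hmem; omega
      simp only [Pi.sub_apply, indFn, if_neg this]; omega
    have h1' : ∃ i, (b - indFn S) i = 1 := by
      refine ⟨i1, ?_⟩
      have hb1 : b i1 = 1 := by simpa using hi1
      simp only [Pi.sub_apply, indFn, if_neg hni1]; omega
    have hl : lambdaCoeff (b - indFn S) = 0 := lambda_NMF _ _ rfl h2' h1'
    rw [show (b - fun i => if i ∈ S then 1 else 0) = b - indFn S from rfl, hl]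
    ring
  rw [Finset.sum_eq_single_of_mem _ hShat_mem hothers]
  have hnoone : ∀ i, (b - indFn (univ.filter fun i => b i = 1)) i ≠ 1 := by
    intro i; by_cases h : b i = 1 <;> simp [indFn, h, Pi.sub_apply]
  have hne : (b - indFn (univ.filter fun i => b i = 1)) ≠ 0 := by
    obtain ⟨i0, hi0⟩ := hNMF
    intro h
    have hh := congrFun h i0
    have : i0 ∉ univ.filter fun i => b i = 1 := by simp; omega
    simp only [Pi.sub_apply, indFn, if_neg this, Pi.zero_apply] at hh
    omega
  have h₁ : lambdaCoeff (b - fun i => if i ∈ (univ.filter fun i => b i = 1) then 1 else 0)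
      = deltaCoeff (b - indFn (univ.filter fun i => b i = 1)) := lambda_noOne _ hne hnoone
  have h₂ : deltaCoeff (b - indFn (univ.filter fun i => b i = 1)) *
      deltaCoeff (fun i => if i ∈ (univ.filter fun i => b i = 1) then 1 else 0)
      = deltaCoeff b := by
    rw [show (fun i => if i ∈ (univ.filter fun i => b i = 1) then 1 else 0)
        = indFn (univ.filter fun i => b i = 1) from rfl, deltaCoeff_indFn]
    conv_rhs => rw [delta_split b]
    ring
  have h₃ : (∏ i, (e i : ℚ) ^ (if b i = 1 then 1 else 0))
      = ∏ i ∈ (univ.filter fun i => b i = 1), (e i : ℚ) := by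
    rw [Finset.prod_filter]
    exact Finset.prod_congr rfl fun i _ => by split <;> simp
  rw [h₁, h₃]
  linear_combination (1 - ∏ i ∈ (univ.filter fun i => b i = 1), (e i : ℚ)) * h₂
end Decomp
end
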